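/- arXiv:1804.09838 — 4 statements merged into one kernel-verified Lean document; each statement's English description precedes it below -/
import Mathlib

section
/- Let A₁,…,Aₙ be real matrices with Aᵢ ∈ ℝ^{c_{i-1}×c_i} forming a complex (Aᵢ ∘ A_{i+1} = 0 for all i). Set rᵢ = rank Aᵢ (with r₀ = r_{n+1} = 0) and hᵢ = cᵢ − (rᵢ + r_{i+1}). Then there exist orthogonal matrices U₀,…,Uₙ with Uᵢ ∈ O(cᵢ) and positive diagonal matrices Σᵢ of size rᵢ×rᵢ such that Uᵢ₋₁ᵀ Aᵢ Uᵢ is the block matrix with block rows of sizes (r_{i-1}, rᵢ, h_{i-1}) and block columns of sizes (rᵢ, r_{i+1}, hᵢ), whose only nonzero block is Σᵢ in position (row block 2, column block 1). -/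
/-!
Let `Tᵢ` be the linear map of `A i`. An eigenbasis of `Tᵢ* Tᵢ`, ordered by decreasing eigenvalue,
consists of right singular vectors `vₖ`: the first `rank Tᵢ` of them satisfy `Tᵢ vₖ = σₖ uₖ`
with `σₖ > 0` and `uₖ` orthonormal, the others span `ker Tᵢ`. Since `Tᵢ₋₁ Tᵢ = 0`, the `uₖ` lie in
`range Tᵢ ⊆ ker Tᵢ₋₁`, hence are orthogonal to the right singular vectors of `Tᵢ₋₁`, which span
`(ker Tᵢ₋₁)ᗮ`. So in `ℝ^{cᵢ}` the right singular vectors of `Tᵢ₋₁` followed by the left singular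
vectors of `Tᵢ` form an orthonormal family; the columns of `Uᵢ` are an orthonormal basis
extending it.
-/

open Matrix Module
open scoped RealInnerProductSpace

namespace LinearMap

variable {E F : Type*} [NormedAddCommGroup E] [InnerProductSpace ℝ E] [FiniteDimensional ℝ E]
  [NormedAddCommGroup F] [InnerProductSpace ℝ F] [FiniteDimensional ℝ F]
  (T : E →ₗ[ℝ] F) {n : ℕ} (hn : finrank ℝ E = n)

noncomputable def rightSingularBasis : OrthonormalBasis (Fin n) ℝ E :=
  T.isSymmetric_adjoint_comp_self.eigenvectorBasis hn

noncomputable def leftSingularVector (j : Fin n) : F :=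
  (T.singularValues j)⁻¹ • T (T.rightSingularBasis hn j)

theorem inner_apply_rightSingularBasis (j l : Fin n) :
    ⟪T (T.rightSingularBasis hn j), T (T.rightSingularBasis hn l)⟫ =
      if j = l then T.singularValues j ^ 2 else 0 := by
  rw [← adjoint_inner_right, ← comp_apply, rightSingularBasis,
    T.isSymmetric_adjoint_comp_self.apply_eigenvectorBasis, real_inner_smul_right,
    orthonormal_iff_ite.mp (OrthonormalBasis.orthonormal _)]
  split_ifs with h
  · subst h; simp [T.sq_singularValues_fin hn]
  · simp

theorem apply_rightSingularBasis_eq_zero {j : Fin n} (hj : finrank ℝ T.range ≤ j) :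
    T (T.rightSingularBasis hn j) = 0 := by
  have := T.inner_apply_rightSingularBasis hn j j
  rwa [if_pos rfl, (T.singularValues_eq_zero_iff_le_finrank_range).2 hj, sq, mul_zero,
    inner_self_eq_zero] at this

theorem apply_rightSingularBasis {j : Fin n} (hj : (j : ℕ) < finrank ℝ T.range) :
    T (T.rightSingularBasis hn j) = T.singularValues j • T.leftSingularVector hn j := by
  rw [leftSingularVector, smul_inv_smul₀ (T.singularValues_pos_iff_lt_finrank_range.2 hj).ne']

theorem leftSingularVector_mem_range (j : Fin n) : T.leftSingularVector hn j ∈ T.range :=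
  Submodule.smul_mem _ _ (mem_range_self _ _)

theorem orthonormal_leftSingularVector_comp {ι : Type*} {f : ι → Fin n}
    (hf : Function.Injective f) (hfr : ∀ i, (f i : ℕ) < finrank ℝ T.range) :
    Orthonormal ℝ (T.leftSingularVector hn ∘ f) := by
  classical
  rw [orthonormal_iff_ite]
  intro i l
  simp only [Function.comp_apply, leftSingularVector, real_inner_smul_left,
    real_inner_smul_right, inner_apply_rightSingularBasis]
  rcases eq_or_ne i l with rfl | h
  · have hσ := (T.singularValues_pos_iff_lt_finrank_range.2 (hfr i)).ne'
    simp only [if_true]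
    field_simp
  · simp [hf.ne h, h]

theorem inner_rightSingularBasis_of_mem_ker {j : Fin n} (hj : (j : ℕ) < finrank ℝ T.range)
    {y : E} (hy : y ∈ ker T) : ⟪T.rightSingularBasis hn j, y⟫ = 0 := by
  have heig := T.isSymmetric_adjoint_comp_self.apply_eigenvectorBasis hn j
  rw [RCLike.ofReal_real_eq_id, id_eq, ← T.sq_singularValues_fin hn] at heig
  have h : T.singularValues j ^ 2 * ⟪T.rightSingularBasis hn j, y⟫ = 0 := by
    rw [← real_inner_smul_left, rightSingularBasis, ← heig, comp_apply, adjoint_inner_left,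
      mem_ker.mp hy, inner_zero_right]
  exact (mul_eq_zero.mp h).resolve_left
    (pow_ne_zero 2 (T.singularValues_pos_iff_lt_finrank_range.2 hj).ne')

theorem apply_eq_zero_of_forall_inner_rightSingularBasis_eq_zero {x : E}
    (hx : ∀ j : Fin n, (j : ℕ) < finrank ℝ T.range → ⟪T.rightSingularBasis hn j, x⟫ = 0) :
    T x = 0 := by
  rw [← (T.rightSingularBasis hn).sum_repr' x, map_sum]
  refine Finset.sum_eq_zero fun j _ => ?_
  rcases lt_or_ge (j : ℕ) (finrank ℝ T.range) with hj | hj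
  · rw [hx j hj, zero_smul, map_zero]
  · rw [map_smul, T.apply_rightSingularBasis_eq_zero hn hj, smul_zero]

theorem inner_apply_eq_ite_singularValues {m p : ℕ} (B : OrthonormalBasis (Fin m) ℝ F)
    (B' : OrthonormalBasis (Fin n) ℝ E) (hpm : p + finrank ℝ T.range ≤ m)
    (hB' : ∀ k : Fin n, (k : ℕ) < finrank ℝ T.range → B' k = T.rightSingularBasis hn k)
    (hB : ∀ (j : Fin m) (k : Fin n), (k : ℕ) < finrank ℝ T.range → (j : ℕ) = p + k →
      B j = T.leftSingularVector hn k)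
    (j : Fin m) (k : Fin n) :
    ⟪B j, T (B' k)⟫ =
      if (j : ℕ) = p + k ∧ (k : ℕ) < finrank ℝ T.range then T.singularValues k else 0 := by
  by_cases hk : (k : ℕ) < finrank ℝ T.range
  · let j₀ : Fin m := ⟨p + k, by omega⟩
    rw [hB' k hk, T.apply_rightSingularBasis hn hk, ← hB j₀ k hk rfl, real_inner_smul_right,
      orthonormal_iff_ite.mp B.orthonormal]
    simp [j₀, Fin.ext_iff, hk]
  · rw [T.apply_eq_zero_of_forall_inner_rightSingularBasis_eq_zero hn, inner_zero_right,
      if_neg fun h => hk h.2]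
    intro l hl
    rw [← hB' l hl, orthonormal_iff_ite.mp B'.orthonormal, if_neg]
    rintro rfl
    exact hk hl

end LinearMap

section Orthonormal

variable {𝕜 E : Type*} [RCLike 𝕜] [NormedAddCommGroup E] [InnerProductSpace 𝕜 E]

theorem Orthonormal.fin_append {p q : ℕ} {v : Fin p → E} {u : Fin q → E}
    (hv : Orthonormal 𝕜 v) (hu : Orthonormal 𝕜 u) (hvu : ∀ j k, inner 𝕜 (v j) (u k) = 0) :
    Orthonormal 𝕜 (Fin.append v u) := by
  rw [orthonormal_iff_ite] at hv hu ⊢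
  intro j l
  induction j using Fin.addCases <;> induction l using Fin.addCases <;>
    simp [hv, hu, hvu, inner_eq_zero_symm.mp (hvu _ _), Fin.ext_iff] <;> omega

theorem Orthonormal.exists_orthonormalBasis_extension_fin [FiniteDimensional 𝕜 E] {m c : ℕ}
    (hc : finrank 𝕜 E = c) {f : Fin m → E} (hf : Orthonormal 𝕜 f) :
    ∃ B : OrthonormalBasis (Fin c) 𝕜 E, ∀ (j : Fin c) (l : Fin m), (j : ℕ) = l → B j = f l := by
  let g : Fin c → E := fun j => if h : (j : ℕ) < m then f ⟨j, h⟩ else 0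
  have hg : Orthonormal 𝕜 ({j : Fin c | (j : ℕ) < m}.domRestrict g) := by
    rw [orthonormal_iff_ite] at hf ⊢
    rintro ⟨j, hj : (j : ℕ) < m⟩ ⟨l, hl : (l : ℕ) < m⟩
    simp [g, hj, hl, hf, Fin.ext_iff]
  obtain ⟨B, hB⟩ := hg.exists_orthonormalBasis_extension_of_card_eq (by simpa using hc)
  refine ⟨B, fun j l hjl => ?_⟩
  rw [hB j (by simp [hjl])]
  simp [g, hjl]

end Orthonormal

theorem transpose_toMatrix_mul_self {ι : Type*} [Fintype ι] [DecidableEq ι]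
    (B : OrthonormalBasis ι ℝ (EuclideanSpace ℝ ι)) :
    ((EuclideanSpace.basisFun ι ℝ).toBasis.toMatrix B)ᵀ *
      (EuclideanSpace.basisFun ι ℝ).toBasis.toMatrix B = 1 := by
  simpa using (EuclideanSpace.basisFun ι ℝ).toMatrix_orthonormalBasis_conjTranspose_mul_self B

theorem transpose_toMatrix_mul_mul_toMatrix_apply {ι κ : Type*} [Fintype ι] [Fintype κ]
    [DecidableEq κ] (M : Matrix ι κ ℝ)
    (B : OrthonormalBasis ι ℝ (EuclideanSpace ℝ ι))
    (B' : OrthonormalBasis κ ℝ (EuclideanSpace ℝ κ)) (j : ι) (k : κ) :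
    (((EuclideanSpace.basisFun ι ℝ).toBasis.toMatrix B)ᵀ * M *
      (EuclideanSpace.basisFun κ ℝ).toBasis.toMatrix B') j k =
      ⟪B j, toEuclideanLin M (B' k)⟫ := by
  simp only [mul_apply, transpose_apply, Basis.toMatrix_apply,
    OrthonormalBasis.coe_toBasis_repr_apply, EuclideanSpace.basisFun_repr, Finset.sum_mul,
    EuclideanSpace.inner_eq_star_dotProduct, dotProduct, ofLp_toLpLin, toLin'_apply, mulVec,
    Pi.star_apply, star_trivial]
  rw [Finset.sum_comm]
  exact Finset.sum_congr rfl fun _ _ => Finset.sum_congr rfl fun _ _ => by ring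

theorem Matrix.rank_eq_finrank_range_toEuclideanLin {m n : ℕ} (M : Matrix (Fin m) (Fin n) ℝ) :
    M.rank = finrank ℝ (toEuclideanLin M).range :=
  M.rank_eq_finrank_range_toLin (PiLp.basisFun 2 ℝ _) (PiLp.basisFun 2 ℝ _)

theorem Matrix.range_toEuclideanLin_le_ker_of_mul_eq_zero {l m n : ℕ}
    {M : Matrix (Fin l) (Fin m) ℝ} {N : Matrix (Fin m) (Fin n) ℝ} (h : M * N = 0) :
    (toEuclideanLin N).range ≤ (toEuclideanLin M).ker := by
  rintro _ ⟨y, rfl⟩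
  rw [LinearMap.mem_ker, ← LinearMap.comp_apply, ← toLpLin_mul_same, h, map_zero,
    LinearMap.zero_apply]

/-- `A i` is the paper's `A_{i+1}`: `r (i+1)` is its rank, and the block `Σ` of
`(U i)ᵀ * A i * U (i+1)` starts at row `r i`, column `0`. -/
theorem svd_of_complex_general (c : ℕ → ℕ)
    (A : ∀ i : ℕ, Matrix (Fin (c i)) (Fin (c (i+1))) ℝ)
    (hcomplex : ∀ i, A i * A (i+1) = 0)
    (r : ℕ → ℕ) (hr0 : r 0 = 0) (hr : ∀ i, r (i+1) = (A i).rank) :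
    ∃ U : ∀ i : ℕ, Matrix (Fin (c i)) (Fin (c i)) ℝ,
      (∀ i, (U i)ᵀ * U i = 1) ∧
      ∀ i, ∃ σ : ℕ → ℝ,
        (∀ s, s < r (i+1) → 0 < σ s) ∧
        ∀ (j : Fin (c i)) (k : Fin (c (i+1))),
          ((U i)ᵀ * A i * U (i+1)) j k =
            if (j : ℕ) = r i + (k : ℕ) ∧ (k : ℕ) < r (i+1) then σ (k : ℕ) else 0 := by
  let T i := toEuclideanLin (A i)
  have hrank i : finrank ℝ (T i).range = r (i+1) :=
    (hr i).trans (A i).rank_eq_finrank_range_toEuclideanLin |>.symm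
  have hrc i : r (i+1) ≤ c (i+1) :=
    hrank i ▸ (T i).finrank_range_le.trans_eq finrank_euclideanSpace_fin
  let u i : Fin (r (i+1)) → EuclideanSpace ℝ (Fin (c i)) :=
    (T i).leftSingularVector finrank_euclideanSpace_fin ∘ Fin.castLE (hrc i)
  -- `v 0` is the empty family, as `r 0 = 0`.
  let v : ∀ i, Fin (r i) → EuclideanSpace ℝ (Fin (c i))
    | 0 => fun _ => 0
    | m+1 => (T m).rightSingularBasis finrank_euclideanSpace_fin ∘ Fin.castLE (hrc m)
  have hv : ∀ i, Orthonormal ℝ (v i)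
    | 0 => by rw [orthonormal_iff_ite]; intro j; exact absurd j.2 (by omega)
    | m+1 => (OrthonormalBasis.orthonormal _).comp _ (Fin.castLE_injective _)
  have hu i : Orthonormal ℝ (u i) :=
    (T i).orthonormal_leftSingularVector_comp _ (Fin.castLE_injective _)
      fun k => (hrank i).symm ▸ k.2
  have hvu : ∀ i j k, ⟪v i j, u i k⟫ = 0
    | 0, j, _ => absurd j.2 (by omega)
    | m+1, j, k => (T m).inner_rightSingularBasis_of_mem_ker _ ((hrank m).symm ▸ j.2)
        (range_toEuclideanLin_le_ker_of_mul_eq_zero (hcomplex m)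
          ((T (m+1)).leftSingularVector_mem_range _ _))
  have hw i := (hv i).fin_append (hu i) (hvu i)
  choose B hB using fun i =>
    (hw i).exists_orthonormalBasis_extension_fin finrank_euclideanSpace_fin
  refine ⟨fun i => (EuclideanSpace.basisFun _ ℝ).toBasis.toMatrix (B i),
    fun i => transpose_toMatrix_mul_self (B i), fun i => ⟨(T i).singularValues,
      fun s hs => (T i).singularValues_pos_iff_lt_finrank_range.2 (hrank i ▸ hs), fun j k => ?_⟩⟩
  rw [transpose_toMatrix_mul_mul_toMatrix_apply, ← hrank i]
  refine (T i).inner_apply_eq_ite_singularValues finrank_euclideanSpace_fin (B i) (B (i+1))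
    ?_ (fun k hk => ?_) (fun j k hk hjk => ?_) j k
  · simpa [hrank] using (hw i).linearIndependent.fintype_card_le_finrank
  · rw [hrank] at hk
    exact (hB (i+1) k (Fin.castAdd _ ⟨k, hk⟩) rfl).trans (Fin.append_left _ _ _)
  · rw [hrank] at hk
    exact (hB i j (Fin.natAdd _ ⟨k, hk⟩) hjk).trans (Fin.append_right _ _ _)

/-- **SVD of a complex.** Here `A i : Matrix (Fin (c i)) (Fin (c (i+1))) ℝ` represents the
differential `A_{i+1} : ℝ^{c_{i+1}} → ℝ^{c_i}` of the complex, `A₀ = A_{n+1} = 0` being the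
convention (maps with index `≥ n+1`, i.e. `A i` for `n ≤ i`, vanish).  `r (i+1) = rank A_{i+1}`
and `r 0 = 0`.  The conclusion states the existence of orthogonal matrices `U i ∈ O(c i)` and
positive diagonal `Σ` such that `(U i)ᵀ * A_{i+1} * U (i+1)` has as its only nonzero block the
`r (i+1) × r (i+1)` positive diagonal block in block-row 2 (rows `r i, …, r i + r (i+1) - 1`)
and block-column 1 (columns `0, …, r (i+1) - 1`). -/
theorem svd_of_complex (n : ℕ) (c : ℕ → ℕ)
    (A : ∀ i : ℕ, Matrix (Fin (c i)) (Fin (c (i+1))) ℝ)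
    (hcomplex : ∀ i, A i * A (i+1) = 0)
    (hzero : ∀ i, n ≤ i → A i = 0)
    (r : ℕ → ℕ) (hr0 : r 0 = 0) (hr : ∀ i, r (i+1) = (A i).rank)
    (h : ℕ → ℕ) (hh : ∀ i, h i = c i - (r i + r (i+1))) :
    ∃ U : ∀ i : ℕ, Matrix (Fin (c i)) (Fin (c i)) ℝ,
      (∀ i, (U i)ᵀ * U i = 1) ∧
      ∀ i, ∃ σ : ℕ → ℝ,
        (∀ s, s < r (i+1) → 0 < σ s) ∧
        ∀ (j : Fin (c i)) (k : Fin (c (i+1))),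
          ((U i)ᵀ * A i * U (i+1)) j k =
            if (j : ℕ) = r i + (k : ℕ) ∧ (k : ℕ) < r (i+1) then σ (k : ℕ) else 0 :=
  svd_of_complex_general c A hcomplex r hr0 hr
end

section
/- Let A₁,…,Aₙ form a complex of real matrices with A₀ = A_{n+1} = 0, and let Aᵢ⁺ be Moore–Penrose pseudoinverses. Then the map id_{ℝ^{cᵢ}} − (Aᵢ⁺ Aᵢ + A_{i+1} A_{i+1}⁺) is the orthogonal projection of ℝ^{cᵢ} onto the subspace Hᵢ = ker Aᵢ ∩ (image A_{i+1})ᗮ (the harmonic representatives of the homology). -/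
/-!
`Q = A⁺A` and `R = BB⁺` are orthogonal projections (Penrose relations), and `QR = 0` because
`AB = 0`; transposing gives `RQ = 0`. Hence `Q + R` and `P = 1 - (Q + R)` are orthogonal
projections, and `range P = ker (Q + R) = ker Q ⊓ ker R`. Finally `ker (A⁺A) = ker A`, and
`ker (BB⁺) = ker (BB⁺)ᵀ = ker Bᵀ = (range B)ᗮ`.
-/

open Matrix

/-- `Ap` satisfies the four Penrose relations for `A`. -/
def IsMoorePenrose {m k : ℕ} (A : Matrix (Fin m) (Fin k) ℝ)
    (Ap : Matrix (Fin k) (Fin m) ℝ) : Prop :=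
  A * Ap * A = A ∧ Ap * A * Ap = Ap ∧ (A * Ap)ᵀ = A * Ap ∧ (Ap * A)ᵀ = Ap * A

open LinearMap

theorem LinearMap.ker_add_eq_inf_of_mul_eq_zero {R M : Type*} [Semiring R] [AddCommGroup M]
    [Module R M] {f g : Module.End R M} (hf : IsIdempotentElem f) (hg : IsIdempotentElem g)
    (hfg : f * g = 0) (hgf : g * f = 0) : ker (f + g) = ker f ⊓ ker g := by
  refine le_antisymm (fun x hx => ?_) fun x ⟨hxf, hxg⟩ => by simp_all
  have hfx : f x = f ((f + g) x) := by
    rw [← Module.End.mul_apply, mul_add, hf.eq, hfg, add_zero]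
  have hgx : g x = g ((f + g) x) := by
    rw [← Module.End.mul_apply, mul_add, hg.eq, hgf, zero_add]
  rw [mem_ker] at hx
  exact Submodule.mem_inf.mpr
    ⟨by rw [mem_ker, hfx, hx, map_zero], by rw [mem_ker, hgx, hx, map_zero]⟩

theorem Matrix.range_toEuclideanLin_one_sub_add {𝕜 n : Type*} [RCLike 𝕜] [Fintype n]
    [DecidableEq n] {Q R : Matrix n n 𝕜} (hQ : IsIdempotentElem Q) (hR : IsIdempotentElem R)
    (hQR : Q * R = 0) (hRQ : R * Q = 0) :
    range (toEuclideanLin (1 - (Q + R))) = ker (toEuclideanLin Q) ⊓ ker (toEuclideanLin R) := by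
  let φ := toLpLinAlgEquiv (R := 𝕜) (n := n) 2
  have hφQ : IsIdempotentElem (φ Q) := hQ.map φ
  have hφR : IsIdempotentElem (φ R) := hR.map φ
  have hQR' : φ Q * φ R = 0 := by rw [← map_mul, hQR, map_zero]
  have hRQ' : φ R * φ Q = 0 := by rw [← map_mul, hRQ, map_zero]
  have hsum : IsIdempotentElem (φ Q + φ R) := hφQ.add hφR (by rw [hQR', hRQ', add_zero])
  change range (φ (1 - (Q + R))) = ker (φ Q) ⊓ ker (φ R)
  rw [map_sub, map_one, map_add, ← hsum.ker_eq_range_one_sub,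
    ker_add_eq_inf_of_mul_eq_zero hφQ hφR hQR' hRQ']

theorem Matrix.ker_toEuclideanLin_mul_eq_of_mul_mul_eq {𝕜 m n : Type*} [RCLike 𝕜] [Fintype m]
    [DecidableEq m] [Fintype n] [DecidableEq n] {M : Matrix m n 𝕜} {N : Matrix n m 𝕜}
    (h : M * N * M = M) : ker (toEuclideanLin (N * M)) = ker (toEuclideanLin M) := by
  refine le_antisymm ?_ ?_
  · calc ker (toEuclideanLin (N * M))
        ≤ ker (toEuclideanLin M ∘ₗ toEuclideanLin (N * M)) := ker_le_ker_comp _ _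
      _ = ker (toEuclideanLin M) := by rw [← toLpLin_mul_same, ← Matrix.mul_assoc, h]
  · rw [toLpLin_mul_same]
    exact ker_le_ker_comp _ _

theorem Matrix.isSelfAdjoint_iff_transpose_eq {n α : Type*} [Star α] [TrivialStar α]
    {M : Matrix n n α} : IsSelfAdjoint M ↔ Mᵀ = M := by
  rw [isSelfAdjoint_iff, star_eq_conjTranspose, conjTranspose_eq_transpose_of_trivial]

namespace IsMoorePenrose

variable {m k : ℕ} {A : Matrix (Fin m) (Fin k) ℝ} {Ap : Matrix (Fin k) (Fin m) ℝ}

theorem isStarProjection_mul_left (h : IsMoorePenrose A Ap) : IsStarProjection (Ap * A) where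
  isIdempotentElem := by rw [IsIdempotentElem, ← Matrix.mul_assoc, h.2.1]
  isSelfAdjoint := isSelfAdjoint_iff_transpose_eq.mpr h.2.2.2

theorem isStarProjection_mul_right (h : IsMoorePenrose A Ap) : IsStarProjection (A * Ap) where
  isIdempotentElem := by rw [IsIdempotentElem, ← Matrix.mul_assoc, h.1]
  isSelfAdjoint := isSelfAdjoint_iff_transpose_eq.mpr h.2.2.1

theorem ker_mul_left (h : IsMoorePenrose A Ap) :
    ker (toEuclideanLin (Ap * A)) = ker (toEuclideanLin A) :=
  ker_toEuclideanLin_mul_eq_of_mul_mul_eq h.1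

theorem ker_mul_right (h : IsMoorePenrose A Ap) :
    ker (toEuclideanLin (A * Ap)) = (range (toEuclideanLin A))ᗮ := by
  have hT : Aᵀ * Apᵀ * Aᵀ = Aᵀ := by
    rw [← transpose_mul, ← transpose_mul, ← Matrix.mul_assoc, h.1]
  rw [orthogonal_range, ← toEuclideanLin_conjTranspose_eq_adjoint,
    conjTranspose_eq_transpose_of_trivial, ← h.2.2.1, transpose_mul,
    ker_toEuclideanLin_mul_eq_of_mul_mul_eq hT]

end IsMoorePenrose

/-- **Projection to homology.** With `A = A_i`, `B = A_{i+1}`, `A * B = 0`, and Moore–Penrose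
pseudoinverses `Ap`, `Bp`, the matrix `id - (A_i⁺ A_i + A_{i+1} A_{i+1}⁺)` is the orthogonal
projection (symmetric idempotent) of `ℝ^{c_i}` onto `H_i = ker A_i ∩ (image A_{i+1})ᗮ`. -/
theorem projection_to_homology (m k l : ℕ)
    (A : Matrix (Fin m) (Fin k) ℝ) (B : Matrix (Fin k) (Fin l) ℝ)
    (hAB : A * B = 0)
    (Ap : Matrix (Fin k) (Fin m) ℝ) (Bp : Matrix (Fin l) (Fin k) ℝ)
    (hAp : IsMoorePenrose A Ap) (hBp : IsMoorePenrose B Bp)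
    (P : Matrix (Fin k) (Fin k) ℝ) (hP : P = 1 - (Ap * A + B * Bp)) :
    Pᵀ = P ∧ P * P = P ∧
    LinearMap.range (toEuclideanLin P) =
      LinearMap.ker (toEuclideanLin A) ⊓ (LinearMap.range (toEuclideanLin B))ᗮ := by
  have hQ := hAp.isStarProjection_mul_left
  have hR := hBp.isStarProjection_mul_right
  have hQR : Ap * A * (B * Bp) = 0 := by
    rw [Matrix.mul_assoc, ← Matrix.mul_assoc A, hAB, Matrix.zero_mul, Matrix.mul_zero]
  have hRQ : B * Bp * (Ap * A) = 0 := by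
    simpa only [star_mul, hQ.isSelfAdjoint.star_eq, hR.isSelfAdjoint.star_eq, star_zero]
      using congr(star $hQR)
  have hPproj : IsStarProjection P := hP ▸ (hQ.add hR hQR).one_sub
  refine ⟨isSelfAdjoint_iff_transpose_eq.mp hPproj.isSelfAdjoint, hPproj.isIdempotentElem, ?_⟩
  rw [hP, range_toEuclideanLin_one_sub_add hQ.isIdempotentElem hR.isIdempotentElem hQR hRQ,
    hAp.ker_mul_left, hBp.ker_mul_right]
end

section
/- Let K ⊆ ℝ be a subfield and A a matrix with entries in K. Then the Moore–Penrose pseudoinverse A⁺ of A (taken over ℝ) has all entries in K. -/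
open Matrix

/-!
The Penrose relations have at most one solution over `ℝ`, so it suffices to exhibit one with
entries in `K`. The matrix `S = A Aᵀ` is symmetric, so no polynomial in `S` is a nonzero nilpotent,
and it is algebraic over `K`, being the image of a matrix over `K`. Writing an annihilating
polynomial of `S` as `Xᵉ g` with `g(0) ≠ 0`, the element `S g(S)` is nilpotent, hence zero, and
this identity rearranges to `S q(S) S = S` for some `q ∈ K[X]`. Then `Aᵀ q(S)` satisfies the
Penrose relations.
-/

open Polynomial

theorem exists_mul_aeval_mul_eq_self {K A : Type*} [Field K] [Ring A] [Algebra K A] {x : A}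
    (hx : IsAlgebraic K x) (hred : ∀ p : K[X], IsNilpotent (aeval x p) → aeval x p = 0) :
    ∃ q : K[X], x * aeval x q * x = x := by
  obtain ⟨p, hp, hpx⟩ := hx
  obtain ⟨g, hpg, hg⟩ := p.exists_eq_pow_rootMultiplicity_mul_and_not_dvd hp 0
  rw [C_0, sub_zero] at hpg hg
  generalize p.rootMultiplicity 0 = e at hpg
  subst hpg
  set c := g.coeff 0
  have hc : c ≠ 0 := mt X_dvd_iff.mpr hg
  have hxg : aeval x (X * g) = 0 := by
    refine hred _ ⟨e + 1, ?_⟩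
    rw [← map_pow, show (X * g) ^ (e + 1) = X ^ e * g * (X * g ^ e) by ring, map_mul, hpx,
      zero_mul]
  have hcc : C c⁻¹ * C c = 1 := by rw [← C_mul, inv_mul_cancel₀ hc, C_1]
  have hpoly : X * (-C c⁻¹ * divX g) * X = X - C c⁻¹ * (X * g) := by
    linear_combination (X : K[X]) * hcc - (C c⁻¹ * X) * X_mul_divX_add g
  refine ⟨-C c⁻¹ * divX g, ?_⟩
  calc x * aeval x (-C c⁻¹ * divX g) * x = aeval x (X * (-C c⁻¹ * divX g) * X) := by
        simp only [map_mul, aeval_X]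
    _ = x := by rw [hpoly, map_sub, map_mul, hxg, mul_zero, sub_zero, aeval_X]

theorem Matrix.transpose_aeval {n R α : Type*} [Fintype n] [DecidableEq n] [CommSemiring R]
    [CommSemiring α] [Algebra R α] (M : Matrix n n α) (p : R[X]) :
    (aeval M p)ᵀ = aeval Mᵀ p :=
  MulOpposite.op_injective <| by
    rw [← aeval_op_apply, ← transposeAlgEquiv_apply n R, ← transposeAlgEquiv_apply n R,
      aeval_algHom_apply]

theorem Matrix.IsHermitian.eq_zero_of_isNilpotent {n R : Type*} [Fintype n] [DecidableEq n]
    [Ring R] [PartialOrder R] [StarRing R] [StarOrderedRing R] [NoZeroDivisors R]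
    {S : Matrix n n R} (hS : S.IsHermitian) (h : IsNilpotent S) : S = 0 := by
  obtain ⟨e, he⟩ := h
  suffices ∀ j, S ^ 2 ^ j = 0 → S = 0 from this e (pow_eq_zero_of_le Nat.lt_two_pow_self.le he)
  intro j
  induction j with
  | zero => simp
  | succ j ih =>
    intro hj
    refine ih (self_mul_conjTranspose_eq_zero.mp ?_)
    rw [(hS.pow _).eq, ← pow_add, ← two_mul, ← pow_succ', hj]

theorem exists_mul_aeval_mul_eq_self_of_transpose_eq {n K : Type*} [Fintype n] [DecidableEq n]
    [Field K] [Algebra K ℝ] {S : Matrix n n ℝ} (hS : Sᵀ = S) (hK : IsAlgebraic K S) :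
    ∃ q : K[X], S * aeval S q * S = S :=
  exists_mul_aeval_mul_eq_self hK fun p hp => IsHermitian.eq_zero_of_isNilpotent
    (by rw [IsHermitian, conjTranspose_eq_transpose_of_trivial, transpose_aeval, hS]) hp

theorem IsMoorePenrose.unique {m k : ℕ} {A : Matrix (Fin m) (Fin k) ℝ}
    {P Q : Matrix (Fin k) (Fin m) ℝ} (hP : IsMoorePenrose A P) (hQ : IsMoorePenrose A Q) :
    P = Q := by
  obtain ⟨hP₁, hP₂, hP₃, hP₄⟩ := hP
  obtain ⟨hQ₁, hQ₂, hQ₃, hQ₄⟩ := hQ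
  have hAP : A * P = A * Q :=
    calc A * P = (A * Q * (A * P))ᵀ := by rw [← Matrix.mul_assoc, hQ₁, hP₃]
      _ = A * P * (A * Q) := by rw [transpose_mul, hP₃, hQ₃]
      _ = A * Q := by rw [← Matrix.mul_assoc, hP₁]
  have hPA : P * A = Q * A :=
    calc P * A = (P * A * (Q * A))ᵀ := by rw [Matrix.mul_assoc, ← Matrix.mul_assoc A, hQ₁, hP₄]
      _ = Q * A * (P * A) := by rw [transpose_mul, hP₄, hQ₄]
      _ = Q * A := by rw [Matrix.mul_assoc, ← Matrix.mul_assoc A, hP₁]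
  calc P = P * A * P := hP₂.symm
    _ = Q * A * Q := by rw [hPA, Matrix.mul_assoc, hAP, ← Matrix.mul_assoc]
    _ = Q := hQ₂

theorem isMoorePenrose_transpose_mul {m k : ℕ} {A : Matrix (Fin m) (Fin k) ℝ}
    {Q : Matrix (Fin m) (Fin m) ℝ} (hQ : Qᵀ = Q) (hcomm : Commute (A * Aᵀ) Q)
    (hinv : A * Aᵀ * Q * (A * Aᵀ) = A * Aᵀ) : IsMoorePenrose A (Aᵀ * Q) := by
  have hP : (A * Aᵀ * Q)ᵀ = A * Aᵀ * Q := by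
    rw [transpose_mul, hQ, transpose_mul, transpose_transpose, hcomm.eq]
  have hPA : A * Aᵀ * Q * A = A := by
    have hS : (A * Aᵀ * Q - 1) * (A * Aᴴ) = 0 := by
      rw [conjTranspose_eq_transpose_of_trivial, Matrix.sub_mul, hinv, Matrix.one_mul, sub_self]
    have := (mul_self_mul_conjTranspose_eq_zero A _).mp hS
    rwa [Matrix.sub_mul, Matrix.one_mul, sub_eq_zero] at this
  have hAtP : Aᵀ * (A * Aᵀ * Q) = Aᵀ := by rw [← hP, ← transpose_mul, hPA]
  refine ⟨?_, ?_, ?_, ?_⟩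
  · rw [← Matrix.mul_assoc, hPA]
  · calc Aᵀ * Q * A * (Aᵀ * Q) = Aᵀ * (Q * (A * Aᵀ)) * Q := by simp only [Matrix.mul_assoc]
      _ = Aᵀ * Q := by rw [← hcomm.eq, hAtP]
  · rw [← Matrix.mul_assoc, hP]
  · rw [transpose_mul, transpose_mul, transpose_transpose, hQ, Matrix.mul_assoc]

/-- If all entries of `A` lie in a subfield `K ⊆ ℝ`, then all entries of its Moore–Penrose
pseudoinverse (taken over `ℝ`) lie in `K` as well. -/
theorem pseudoinverse_entries_mem_subfield (m k : ℕ) (K : Subfield ℝ)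
    (A : Matrix (Fin m) (Fin k) ℝ) (hA : ∀ i j, A i j ∈ K)
    (Ap : Matrix (Fin k) (Fin m) ℝ) (hAp : IsMoorePenrose A Ap) :
    ∀ i j, Ap i j ∈ K := by
  set A' : Matrix (Fin m) (Fin k) K := of fun i j => ⟨A i j, hA i j⟩
  have hA' : A'.map (Algebra.ofId K ℝ) = A := rfl
  set f := (Algebra.ofId K ℝ).mapMatrix (m := Fin m)
  have hS : f (A' * A'ᵀ) = A * Aᵀ := by
    rw [AlgHom.mapMatrix_apply, Matrix.map_mul, transpose_map, hA']
  have hS_symm : (A * Aᵀ)ᵀ = A * Aᵀ := by rw [transpose_mul, transpose_transpose]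
  have hS_alg : IsAlgebraic K (A * Aᵀ) := hS ▸ (IsAlgebraic.of_finite K _).algHom f
  obtain ⟨q, hq⟩ := exists_mul_aeval_mul_eq_self_of_transpose_eq hS_symm hS_alg
  have hAp_eq : Ap = (A'ᵀ * aeval (A' * A'ᵀ) q).map (Algebra.ofId K ℝ) := by
    rw [Matrix.map_mul, transpose_map, hA', ← AlgHom.mapMatrix_apply, ← aeval_algHom_apply, hS]
    exact hAp.unique <| isMoorePenrose_transpose_mul
      (by rw [transpose_aeval, hS_symm])
      (by simpa using (Commute.all X q).map (aeval (A * Aᵀ))) hq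
  intro i j
  rw [hAp_eq]
  exact ((A'ᵀ * aeval (A' * A'ᵀ) q) i j).2
end

section
/- Given sequences c₀,…,cₙ of nonnegative integers and h₀,…,hₙ of desired homology dimensions, define r₀ = 0 and r_{i+1} = cᵢ − rᵢ − hᵢ recursively. Then a complex A₁,…,Aₙ with Aᵢ ∈ ℝ^{c_{i-1}×c_i}, rank Aᵢ = rᵢ, and dim(ker Aᵢ/image A_{i+1}) = hᵢ for all i exists if and only if rᵢ ≥ 0 for all 1 ≤ i ≤ n and r_{n+1} = 0. -/
/-!
For a complex, rank–nullity at each position gives the dimension count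
`cᵢ = rank Aᵢ + rank Aᵢ₊₁ + hᵢ`, so the ranks of any complex with homology `h` obey the recursion
defining `r`; hence `rᵢ ≥ 0` and `r_{n+1} = rank A_{n+1} = 0`. Conversely, if these conditions
hold then `rᵢ + rᵢ₊₁ ≤ cᵢ`, so we may let `Aᵢ` map the first `rᵢ` coordinates of `ℝ^{cᵢ}`
identically onto the last `rᵢ` coordinates of `ℝ^{cᵢ₋₁}`: consecutive maps then compose to zero,
`rank Aᵢ = rᵢ`, and the dimension count yields the homology `h`.
-/

open Matrix

/-- The dimension of the homology of the complex `… → ℝ^{c (i+1)} → ℝ^{c i} → …` (where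
`A i` represents the differential `A_{i+1} : ℝ^{c (i+1)} → ℝ^{c i}` and `A₀ = 0` by
convention) at position `i`, i.e. `dim (ker A_i / image A_{i+1})`. -/
noncomputable def homologyDim (c : ℕ → ℕ) (A : ∀ i : ℕ, Matrix (Fin (c i)) (Fin (c (i+1))) ℝ) : ℕ → ℕ
  | 0 => Module.finrank ℝ ((Fin (c 0) → ℝ) ⧸ LinearMap.range (Matrix.toLin' (A 0)))
  | (i+1) => Module.finrank ℝ
      (↥(LinearMap.ker (Matrix.toLin' (A i))) ⧸
        (LinearMap.range (Matrix.toLin' (A (i+1)))).comap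
          (LinearMap.ker (Matrix.toLin' (A i))).subtype)

namespace Matrix

variable {K : Type*} [Field K] {m n : Type*} [Fintype n]

theorem rank_eq_finrank_range_toLin' [DecidableEq n] (A : Matrix m n K) :
    A.rank = Module.finrank K (LinearMap.range (toLin' A)) := by
  rw [toLin'_apply']
  rfl

theorem rank_eq_zero_iff [Finite m] {A : Matrix m n K} : A.rank = 0 ↔ A = 0 := by
  classical
  refine ⟨fun h => ?_, fun h => h ▸ rank_zero⟩
  rw [rank_eq_finrank_range_toLin', Submodule.finrank_eq_zero, LinearMap.range_eq_bot] at h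
  exact toLin'.injective (h.trans (map_zero _).symm)

end Matrix

def bottomLeftIdentity (K : Type*) [Zero K] [One K] (m k ρ : ℕ) : Matrix (Fin m) (Fin k) K :=
  Matrix.of fun a b => if (b : ℕ) < ρ ∧ (a : ℕ) = b + (m - ρ) then 1 else 0

section bottomLeftIdentity

variable {K : Type*}

theorem bottomLeftIdentity_mul_bottomLeftIdentity [NonAssocSemiring K] {m k l ρ σ : ℕ}
    (h : ρ + σ ≤ k) : bottomLeftIdentity K m k ρ * bottomLeftIdentity K k l σ = 0 := by
  ext a c
  rw [Matrix.mul_apply]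
  refine Finset.sum_eq_zero fun b _ => ?_
  simp only [bottomLeftIdentity, Matrix.of_apply]
  split_ifs with h₁ h₂
  · omega
  all_goals simp

variable [Field K]

theorem le_rank_bottomLeftIdentity {m k ρ : ℕ} (hm : ρ ≤ m) (hk : ρ ≤ k) :
    ρ ≤ (bottomLeftIdentity K m k ρ).rank := by
  let row : Fin ρ → Fin m := fun j => ⟨j + (m - ρ), by omega⟩
  have hsub : (bottomLeftIdentity K m k ρ).submatrix row (Fin.castLE hk) = 1 := by
    ext i j
    simp [row, bottomLeftIdentity, Matrix.one_apply, Fin.ext_iff]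
  simpa [hsub] using Matrix.rank_submatrix_le (bottomLeftIdentity K m k ρ) row (Fin.castLE hk)

theorem rank_bottomLeftIdentity {m k ρ : ℕ} (hm : ρ ≤ m) (hk : ρ ≤ k) :
    (bottomLeftIdentity K m k ρ).rank = ρ := by
  -- upper bound: the complementary matrix of rank `≥ k - ρ` composes with this one to zero
  have hsum := Matrix.rank_add_rank_le_card_of_mul_eq_zero
    (bottomLeftIdentity_mul_bottomLeftIdentity (K := K) (m := m) (l := k) (Nat.add_sub_cancel' hk).le)
  have hcompl := le_rank_bottomLeftIdentity (K := K) (Nat.sub_le k ρ) (Nat.sub_le k ρ)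
  have hlow := le_rank_bottomLeftIdentity (K := K) hm hk
  rw [Fintype.card_fin] at hsum
  omega

end bottomLeftIdentity

theorem LinearMap.finrank_quotient_range_add_finrank_range_add_finrank_range {K U V W : Type*}
    [Field K] [AddCommGroup U] [Module K U] [AddCommGroup V] [Module K V] [AddCommGroup W]
    [Module K W] [FiniteDimensional K V] (f : V →ₗ[K] W) (g : U →ₗ[K] V)
    (hfg : LinearMap.range g ≤ LinearMap.ker f) :
    Module.finrank K (LinearMap.ker f ⧸ (LinearMap.range g).comap (LinearMap.ker f).subtype) +
      Module.finrank K (LinearMap.range f) + Module.finrank K (LinearMap.range g) =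
      Module.finrank K V := by
  have hquot := Submodule.finrank_quotient_add_finrank
    ((LinearMap.range g).comap (LinearMap.ker f).subtype)
  rw [(Submodule.comapSubtypeEquivOfLe hfg).finrank_eq] at hquot
  have hker := f.finrank_range_add_finrank_ker
  omega

/-- `diffRank A i` is the rank of the paper's `Aᵢ : ℝ^{cᵢ} → ℝ^{cᵢ₋₁}`, which is `A (i - 1)` here;
the convention `A₀ = 0` becomes `diffRank A 0 = 0`. -/
noncomputable def diffRank {c : ℕ → ℕ} (A : ∀ i, Matrix (Fin (c i)) (Fin (c (i+1))) ℝ) : ℕ → ℕ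
  | 0 => 0
  | i + 1 => (A i).rank

theorem homologyDim_add_diffRank_add_diffRank {c : ℕ → ℕ}
    {A : ∀ i, Matrix (Fin (c i)) (Fin (c (i+1))) ℝ} (hA : ∀ i, A i * A (i+1) = 0) (i : ℕ) :
    homologyDim c A i + diffRank A i + diffRank A (i+1) = c i := by
  cases i with
  | zero =>
    have := Submodule.finrank_quotient_add_finrank (LinearMap.range (Matrix.toLin' (A 0)))
    simp only [homologyDim, diffRank, Matrix.rank_eq_finrank_range_toLin']
    simpa using this
  | succ i =>
    have hrange : LinearMap.range (Matrix.toLin' (A (i+1))) ≤ LinearMap.ker (Matrix.toLin' (A i)) := by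
      rw [LinearMap.range_le_ker_iff, ← Matrix.toLin'_mul, hA, map_zero]
    simpa [homologyDim, diffRank, Matrix.rank_eq_finrank_range_toLin'] using
      LinearMap.finrank_quotient_range_add_finrank_range_add_finrank_range _ _ hrange

theorem eq_of_dimension_count {n : ℕ} {c h s : ℕ → ℕ} {r : ℕ → ℤ} (hr0 : r 0 = 0)
    (hrrec : ∀ i, r (i+1) = c i - r i - h i) (hs0 : s 0 = 0)
    (hs : ∀ i ≤ n, s i + s (i+1) + h i = c i) : ∀ i ≤ n + 1, (s i : ℤ) = r i
  | 0, _ => by simp [hs0, hr0]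
  | i + 1, hi => by
    have := eq_of_dimension_count hr0 hrrec hs0 hs i (by omega)
    have := hs i (by omega)
    have := hrrec i
    omega

theorem exists_complex_diffRank_eq (c s : ℕ → ℕ) (hs0 : s 0 = 0)
    (hs : ∀ i, s i + s (i+1) ≤ c i) :
    ∃ A : ∀ i, Matrix (Fin (c i)) (Fin (c (i+1))) ℝ, (∀ i, A i * A (i+1) = 0) ∧ diffRank A = s := by
  refine ⟨fun i => bottomLeftIdentity ℝ (c i) (c (i+1)) (s (i+1)),
    fun i => bottomLeftIdentity_mul_bottomLeftIdentity (hs (i+1)), funext fun i => ?_⟩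
  cases i with
  | zero => exact hs0.symm
  | succ i =>
    have := hs i
    have := hs (i+1)
    exact rank_bottomLeftIdentity (by omega) (by omega)

theorem exists_nat_ranks_of_nonneg {n : ℕ} {c h : ℕ → ℕ} {r : ℕ → ℤ} (hr0 : r 0 = 0)
    (hrrec : ∀ i, r (i+1) = c i - r i - h i) (hpos : ∀ i, 1 ≤ i → i ≤ n → 0 ≤ r i)
    (hend : r (n+1) = 0) :
    ∃ s : ℕ → ℕ, (∀ i, s i + s (i+1) ≤ c i) ∧ (∀ i ≤ n + 1, (s i : ℤ) = r i) ∧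
      ∀ i, n < i → s i = 0 := by
  set s : ℕ → ℕ := fun i => if i ≤ n then (r i).toNat else 0
  have hs_zero : ∀ i, n < i → s i = 0 := fun i hi => if_neg hi.not_ge
  have hsr : ∀ i ≤ n + 1, (s i : ℤ) = r i := by
    intro i hi
    rcases Nat.lt_or_ge n i with hni | hin
    · rw [hs_zero i hni, show i = n + 1 by omega, hend, Nat.cast_zero]
    · rcases Nat.eq_zero_or_pos i with rfl | hi0
      · simp [s, hr0]
      · simp [s, hin, hpos i hi0 hin]
  refine ⟨s, fun i => ?_, hsr, hs_zero⟩
  rcases Nat.lt_or_ge n i with hni | hin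
  · rw [hs_zero i hni, hs_zero (i+1) (by omega)]
    exact Nat.zero_le _
  · have := hsr i (by omega)
    have := hsr (i+1) (by omega)
    have := hrrec i
    omega

/-- **Projection to a complex: feasibility.** Given desired dimensions `c 0, …, c n` and
homology dimensions `h 0, …, h n`, define `r 0 = 0` and `r (i+1) = c i - r i - h i`
recursively (in `ℤ`).  Then a complex `A_1, …, A_n` (with `A i` representing
`A_{i+1} : ℝ^{c (i+1)} → ℝ^{c i}`, vanishing for indices beyond `n`) with `rank A_i = r i`
and `dim (ker A_i / image A_{i+1}) = h i` for all `i` exists if and only if `r i ≥ 0` for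
all `1 ≤ i ≤ n` and `r (n+1) = 0`. -/
theorem complex_with_prescribed_ranks_and_homology_exists_iff
    (n : ℕ) (c h : ℕ → ℕ) (r : ℕ → ℤ)
    (hr0 : r 0 = 0) (hrrec : ∀ i, r (i+1) = (c i : ℤ) - r i - (h i : ℤ)) :
    (∃ A : ∀ i : ℕ, Matrix (Fin (c i)) (Fin (c (i+1))) ℝ,
        (∀ i, A i * A (i+1) = 0) ∧
        (∀ i, n ≤ i → A i = 0) ∧
        (∀ i < n, ((A i).rank : ℤ) = r (i+1)) ∧
        (∀ i ≤ n, (homologyDim c A i : ℤ) = h i)) ↔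
      ((∀ i, 1 ≤ i → i ≤ n → 0 ≤ r i) ∧ r (n+1) = 0) := by
  constructor
  · rintro ⟨A, hA, hzero, -, hhom⟩
    have hr : ∀ i ≤ n + 1, (diffRank A i : ℤ) = r i :=
      eq_of_dimension_count hr0 hrrec rfl fun i hi => by
        have := homologyDim_add_diffRank_add_diffRank hA i
        have := hhom i hi
        omega
    refine ⟨fun i _ hi => hr i (by omega) ▸ Int.natCast_nonneg _, ?_⟩
    rw [← hr (n+1) le_rfl, diffRank, hzero n le_rfl, Matrix.rank_zero, Nat.cast_zero]
  · rintro ⟨hpos, hend⟩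
    obtain ⟨s, hs, hsr, hs_zero⟩ := exists_nat_ranks_of_nonneg hr0 hrrec hpos hend
    have hs0 : s 0 = 0 := by have := hsr 0 (by omega); omega
    obtain ⟨A, hA, hrk⟩ := exists_complex_diffRank_eq c s hs0 hs
    have hrank : ∀ i, (A i).rank = s (i+1) := fun i => congrFun hrk (i+1)
    refine ⟨A, hA, fun i hi => ?_, fun i hi => by rw [hrank, hsr (i+1) (by omega)], fun i hi => ?_⟩
    · rw [← Matrix.rank_eq_zero_iff, hrank, hs_zero (i+1) (by omega)]
    · have := homologyDim_add_diffRank_add_diffRank hA i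
      rw [hrk] at this
      have := hsr i (by omega)
      have := hsr (i+1) (by omega)
      have := hrrec i
      omega
end
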